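/- Let ψ be a branching mechanism of Lévy–Khintchine form with γ > 1, and let g be the gauge function defined on (0, r₀). For every c ∈ (0,∞) there exists r(c) ∈ (0, r₀), depending only on ψ and c, such that for all r ∈ (0, r(c)): g(r) · ψ′^{−1}(c·r^{−2}) ≤ 4r². -/

import Mathlib

open MeasureTheory Filter Set

noncomputable section

/-- The branching mechanism `ψ(λ) = αλ + βλ² + ∫_{(0,∞)} (e^{−λr} − 1 + λr) π(dr)`. -/
def psiFun (α β : ℝ) (π : Measure ℝ) : ℝ → ℝ := fun l =>
  α * l + β * l ^ 2 + ∫ r, (Real.exp (-(l * r)) - 1 + l * r) ∂π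

/-- `ψ′(λ) = α + 2βλ + ∫_{(0,∞)} r(1 − e^{−λr}) π(dr)`. -/
def psiDeriv (α β : ℝ) (π : Measure ℝ) : ℝ → ℝ := fun l =>
  α + 2 * β * l + ∫ r, r * (1 - Real.exp (-(l * r))) ∂π

/-- `(α, β, π)` is the datum of a (sub)critical branching mechanism of
Lévy–Khintchine form: `α, β ≥ 0`, `π` is a Borel measure carried by `(0,∞)`
with `∫ min(r, r²) π(dr) < ∞`. -/
structure IsBranchingMechanism (α β : ℝ) (π : Measure ℝ) : Prop where
  alpha_nonneg : 0 ≤ α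
  beta_nonneg : 0 ≤ β
  carried_on_pos : π (Set.Iic 0) = 0
  integ_min : Integrable (fun r => min r (r ^ 2)) π

/-- The lower index `γ_f = sup {c ≥ 0 : f(λ)λ^{−c} → ∞}` (with `sup ∅ = 0`). -/
def lowerIndex (f : ℝ → ℝ) : ℝ :=
  sSup {c : ℝ | 0 ≤ c ∧ Tendsto (fun l : ℝ => f l * l ^ (-c)) atTop atTop}

/-- The upper index `η_f = inf {c ≥ 0 : f(λ)λ^{−c} → 0}`. -/
def upperIndex (f : ℝ → ℝ) : ℝ :=
  sInf {c : ℝ | 0 ≤ c ∧ Tendsto (fun l : ℝ => f l * l ^ (-c)) atTop (nhds 0)}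

/-- `δ_f = sup {c ≥ 0 : ∃ C > 0, ∀ 1 ≤ μ ≤ λ, C f(μ)μ^{−c} ≤ f(λ)λ^{−c}}`. -/
def deltaIndex (f : ℝ → ℝ) : ℝ :=
  sSup {c : ℝ | 0 ≤ c ∧ ∃ C : ℝ, 0 < C ∧
    ∀ μ l : ℝ, 1 ≤ μ → μ ≤ l → C * (f μ * μ ^ (-c)) ≤ f l * l ^ (-c)}

/-- `r₀ = min(α^{−1/2}, e^{−e})`, with the convention `α^{−1/2} = ∞` when `α = 0`. -/
def gaugeR0 (α : ℝ) : ℝ :=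
  if α = 0 then Real.exp (-Real.exp 1)
  else min (α ^ (-(1 : ℝ) / 2)) (Real.exp (-Real.exp 1))

/-- The gauge function `g(r) = log log(1/r) / φ^{−1}(((1/r)·log log(1/r))²)`,
expressed through the inverse `φ^{−1}` of `φ = ψ′ ∘ ψ^{−1}`. -/
def gaugeFun (φinv : ℝ → ℝ) : ℝ → ℝ := fun r =>
  Real.log (Real.log (1 / r)) / φinv ((1 / r * Real.log (Real.log (1 / r))) ^ 2)

/-!
Write `L = log log(1/r)`, `u = ψ′⁻¹(c/r²)` and `v = ψ′⁻¹(L²/r²)`, so that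
`φ⁻¹(L²/r²) = ψ(v)` and the claim reads `L·u ≤ 4r²·ψ(v)`. Since `λ ↦ ψ′(λ)/λ` is
nonincreasing and `ψ` lies above its tangent at `u`,
`u·(ψ′(v) − ψ′(u)) ≤ (v − u)·ψ′(u) ≤ ψ(v)`, i.e. `u·(L² − c) ≤ r²·ψ(v)`,
and `L ≤ 4(L² − c)` as soon as `r` is small enough for `L` to be large.
-/

open Topology

lemma exp_neg_sub_one_add_nonneg (x : ℝ) : 0 ≤ Real.exp (-x) - 1 + x := by
  linarith [Real.one_sub_le_exp_neg x]

lemma exp_neg_sub_one_add_le_mul_one_sub_exp_neg (x : ℝ) :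
    Real.exp (-x) - 1 + x ≤ x * (1 - Real.exp (-x)) := by
  have h : (x + 1) * Real.exp (-x) ≤ 1 := by
    calc (x + 1) * Real.exp (-x) ≤ Real.exp x * Real.exp (-x) :=
          mul_le_mul_of_nonneg_right (Real.add_one_le_exp x) (Real.exp_nonneg _)
      _ = 1 := by rw [← Real.exp_add, add_neg_cancel, Real.exp_zero]
  linarith

/-- Concavity of `x ↦ 1 − e^{−x}`, which vanishes at `0`. -/
lemma mul_one_sub_exp_neg_le {a b : ℝ} (ha : 0 ≤ a) (hab : a ≤ b) :
    a * (1 - Real.exp (-b)) ≤ b * (1 - Real.exp (-a)) := by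
  rcases (ha.trans hab).eq_or_lt with hb | hb
  · obtain rfl : a = 0 := le_antisymm (hb ▸ hab) ha
    simp
  have hconv := convexOn_exp.2 (mem_univ (-b)) (mem_univ 0) (div_nonneg ha hb.le)
    (sub_nonneg.2 ((div_le_one hb).2 hab)) (add_sub_cancel _ _)
  have hpt : a / b * -b = -a := by field_simp
  simp only [smul_eq_mul, mul_zero, add_zero, Real.exp_zero, mul_one, hpt] at hconv
  have := mul_le_mul_of_nonneg_left hconv hb.le
  rw [mul_add, mul_sub, ← mul_assoc, mul_div_cancel₀ _ hb.ne'] at this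
  linarith

section BranchingMechanism

variable {α β : ℝ} {π : Measure ℝ}

lemma IsBranchingMechanism.ae_pos (h : IsBranchingMechanism α β π) : ∀ᵐ r ∂π, 0 < r := by
  rw [ae_iff]
  convert h.carried_on_pos using 2
  ext r
  simp

lemma IsBranchingMechanism.integrable_psiDeriv_integrand (h : IsBranchingMechanism α β π)
    {l : ℝ} (hl : 0 ≤ l) : Integrable (fun r => r * (1 - Real.exp (-(l * r)))) π := by
  refine (h.integ_min.const_mul (max 1 l)).mono' (by fun_prop) ?_
  filter_upwards [h.ae_pos] with r hr
  have hlr : 0 ≤ l * r := mul_nonneg hl hr.le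
  have h0 : 0 ≤ 1 - Real.exp (-(l * r)) := by
    linarith [Real.exp_le_one_iff.2 (neg_nonpos.2 hlr)]
  have h1 : 1 - Real.exp (-(l * r)) ≤ 1 := by linarith [Real.exp_pos (-(l * r))]
  have h2 : 1 - Real.exp (-(l * r)) ≤ l * r := by linarith [Real.one_sub_le_exp_neg (l * r)]
  rw [Real.norm_eq_abs, abs_of_nonneg (mul_nonneg hr.le h0)]
  rcases le_total r 1 with hr1 | hr1
  · rw [min_eq_right (by nlinarith)]
    calc r * (1 - Real.exp (-(l * r))) ≤ r * (l * r) := mul_le_mul_of_nonneg_left h2 hr.le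
      _ ≤ max 1 l * r ^ 2 := by nlinarith [le_max_right 1 l]
  · rw [min_eq_left (by nlinarith)]
    calc r * (1 - Real.exp (-(l * r))) ≤ r * 1 := mul_le_mul_of_nonneg_left h1 hr.le
      _ ≤ max 1 l * r := by nlinarith [le_max_left 1 l]

lemma IsBranchingMechanism.integrable_psiFun_integrand (h : IsBranchingMechanism α β π)
    {l : ℝ} (hl : 0 ≤ l) : Integrable (fun r => Real.exp (-(l * r)) - 1 + l * r) π := by
  refine ((h.integrable_psiDeriv_integrand hl).const_mul l).mono' (by fun_prop) ?_
  filter_upwards with r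
  rw [Real.norm_eq_abs, abs_of_nonneg (exp_neg_sub_one_add_nonneg _), ← mul_assoc]
  exact exp_neg_sub_one_add_le_mul_one_sub_exp_neg (l * r)

lemma IsBranchingMechanism.psiFun_nonneg (h : IsBranchingMechanism α β π) {l : ℝ} (hl : 0 ≤ l) :
    0 ≤ psiFun α β π l := by
  have hI : 0 ≤ ∫ r, (Real.exp (-(l * r)) - 1 + l * r) ∂π :=
    integral_nonneg fun r => exp_neg_sub_one_add_nonneg (l * r)
  have := h.alpha_nonneg
  have := h.beta_nonneg
  unfold psiFun
  positivity

lemma IsBranchingMechanism.psiDeriv_mono (h : IsBranchingMechanism α β π) {u v : ℝ}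
    (hu : 0 ≤ u) (huv : u ≤ v) : psiDeriv α β π u ≤ psiDeriv α β π v := by
  have hI : ∫ r, r * (1 - Real.exp (-(u * r))) ∂π ≤ ∫ r, r * (1 - Real.exp (-(v * r))) ∂π := by
    refine integral_mono_ae (h.integrable_psiDeriv_integrand hu)
      (h.integrable_psiDeriv_integrand (hu.trans huv)) ?_
    filter_upwards [h.ae_pos] with r hr
    have : Real.exp (-(v * r)) ≤ Real.exp (-(u * r)) := Real.exp_le_exp.2 (by nlinarith)
    nlinarith
  have := h.beta_nonneg
  unfold psiDeriv
  nlinarith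

lemma IsBranchingMechanism.mul_psiDeriv_le (h : IsBranchingMechanism α β π) {u v : ℝ}
    (hu : 0 ≤ u) (huv : u ≤ v) : u * psiDeriv α β π v ≤ v * psiDeriv α β π u := by
  have hI : u * ∫ r, r * (1 - Real.exp (-(v * r))) ∂π ≤
      v * ∫ r, r * (1 - Real.exp (-(u * r))) ∂π := by
    rw [← integral_const_mul, ← integral_const_mul]
    refine integral_mono_ae ((h.integrable_psiDeriv_integrand (hu.trans huv)).const_mul u)
      ((h.integrable_psiDeriv_integrand hu).const_mul v) ?_
    filter_upwards [h.ae_pos] with r hr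
    have := mul_one_sub_exp_neg_le (mul_nonneg hu hr.le) (mul_le_mul_of_nonneg_right huv hr.le)
    linarith
  have := h.alpha_nonneg
  unfold psiDeriv
  nlinarith

lemma IsBranchingMechanism.psiFun_add_mul_psiDeriv_le (h : IsBranchingMechanism α β π) {u v : ℝ}
    (hu : 0 ≤ u) (hv : 0 ≤ v) :
    psiFun α β π u + (v - u) * psiDeriv α β π u ≤ psiFun α β π v := by
  have hI : ∫ r, (Real.exp (-(u * r)) - 1 + u * r) ∂π +
      (v - u) * ∫ r, r * (1 - Real.exp (-(u * r))) ∂π ≤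
      ∫ r, (Real.exp (-(v * r)) - 1 + v * r) ∂π := by
    rw [← integral_const_mul, ← integral_add (h.integrable_psiFun_integrand hu)
      ((h.integrable_psiDeriv_integrand hu).const_mul _)]
    refine integral_mono ((h.integrable_psiFun_integrand hu).add
      ((h.integrable_psiDeriv_integrand hu).const_mul _)) (h.integrable_psiFun_integrand hv)
      fun r => ?_
    have hexp : Real.exp (-(v * r)) = Real.exp (-(u * r)) * Real.exp (-((v - u) * r)) := by
      rw [← Real.exp_add]; ring_nf
    have := mul_le_mul_of_nonneg_left (Real.add_one_le_exp (-((v - u) * r)))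
      (Real.exp_nonneg (-(u * r)))
    nlinarith
  have := mul_nonneg h.beta_nonneg (sq_nonneg (v - u))
  unfold psiFun psiDeriv
  nlinarith

lemma IsBranchingMechanism.mul_psiDeriv_sub_le_psiFun (h : IsBranchingMechanism α β π)
    {u v : ℝ} (hu : 0 ≤ u) (hv : 0 ≤ v) :
    u * (psiDeriv α β π v - psiDeriv α β π u) ≤ psiFun α β π v := by
  rcases le_total u v with huv | hvu
  · calc u * (psiDeriv α β π v - psiDeriv α β π u)
          ≤ (v - u) * psiDeriv α β π u := by linarith [h.mul_psiDeriv_le hu huv]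
      _ ≤ psiFun α β π v := by linarith [h.psiFun_add_mul_psiDeriv_le hu hv, h.psiFun_nonneg hu]
  · calc u * (psiDeriv α β π v - psiDeriv α β π u) ≤ 0 :=
          mul_nonpos_of_nonneg_of_nonpos hu (sub_nonpos.2 (h.psiDeriv_mono hv hvu))
      _ ≤ psiFun α β π v := h.psiFun_nonneg hv

end BranchingMechanism

lemma gaugeR0_pos {α : ℝ} (hα : 0 ≤ α) : 0 < gaugeR0 α := by
  unfold gaugeR0
  split_ifs with hα0
  · positivity
  · exact lt_min (Real.rpow_pos_of_pos (lt_of_le_of_ne hα (Ne.symm hα0)) _) (Real.exp_pos _)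

lemma tendsto_log_log_one_div_nhdsGT_zero :
    Tendsto (fun r : ℝ => Real.log (Real.log (1 / r))) (𝓝[>] 0) atTop := by
  simpa only [one_div, Function.comp_def] using
    (Real.tendsto_log_atTop.comp (Real.tendsto_log_atTop.comp tendsto_inv_nhdsGT_zero) :)

lemma gaugeFun_mul_le {α β : ℝ} {π : Measure ℝ} (h : IsBranchingMechanism α β π)
    {ψinv φinv ψ'inv : ℝ → ℝ}
    (hψinv' : ∀ y : ℝ, 0 ≤ y → ψinv (psiFun α β π y) = y)
    (hφinv' : ∀ y : ℝ, 0 ≤ y → φinv (psiDeriv α β π (ψinv y)) = y)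
    (hψ'inv : ∀ x : ℝ, α ≤ x → 0 ≤ ψ'inv x ∧ psiDeriv α β π (ψ'inv x) = x)
    {c r : ℝ} (hr : 0 < r) (hαc : α * r ^ 2 ≤ c)
    (hL : 0 ≤ Real.log (Real.log (1 / r)))
    (hLc : Real.log (Real.log (1 / r)) ≤ 4 * (Real.log (Real.log (1 / r)) ^ 2 - c)) :
    gaugeFun φinv r * ψ'inv (c / r ^ 2) ≤ 4 * r ^ 2 := by
  set L := Real.log (Real.log (1 / r))
  have hr2 : 0 < r ^ 2 := by positivity
  have hX : (1 / r * L) ^ 2 = L ^ 2 / r ^ 2 := by ring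
  obtain ⟨hu, hψ'u⟩ := hψ'inv (c / r ^ 2) ((le_div_iff₀ hr2).2 (by linarith))
  obtain ⟨hv, hψ'v⟩ := hψ'inv (L ^ 2 / r ^ 2) ((le_div_iff₀ hr2).2 (by nlinarith))
  set u := ψ'inv (c / r ^ 2)
  set v := ψ'inv (L ^ 2 / r ^ 2)
  have hφv : φinv (L ^ 2 / r ^ 2) = psiFun α β π v := by
    have := hφinv' (psiFun α β π v) (h.psiFun_nonneg hv)
    rwa [hψinv' v hv, hψ'v] at this
  have hkey : u * (L ^ 2 - c) ≤ r ^ 2 * psiFun α β π v := by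
    have := h.mul_psiDeriv_sub_le_psiFun hu hv
    rw [hψ'u, hψ'v, ← sub_div, mul_div_assoc', div_le_iff₀ hr2] at this
    linarith
  have hψv := h.psiFun_nonneg hv
  change L / φinv ((1 / r * L) ^ 2) * u ≤ 4 * r ^ 2
  rw [hX, hφv]
  rcases hψv.eq_or_lt with hψ0 | hψpos
  · rw [← hψ0, div_zero, zero_mul]; positivity
  rw [div_mul_eq_mul_div, div_le_iff₀ hψpos]
  nlinarith [mul_le_mul_of_nonneg_left hLc hu]

theorem statement7_general (α β : ℝ) (π : Measure ℝ) (h : IsBranchingMechanism α β π)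
    (ψinv φinv ψ'inv : ℝ → ℝ)
    (hψinv' : ∀ y : ℝ, 0 ≤ y → ψinv (psiFun α β π y) = y)
    (hφinv' : ∀ y : ℝ, 0 ≤ y → φinv (psiDeriv α β π (ψinv y)) = y)
    (hψ'inv : ∀ x : ℝ, α ≤ x → 0 ≤ ψ'inv x ∧ psiDeriv α β π (ψ'inv x) = x)
    (c : ℝ) (hc : 0 < c) :
    ∃ rc : ℝ, 0 < rc ∧ rc < gaugeR0 α ∧
      ∀ r : ℝ, 0 < r → r < rc →
        gaugeFun φinv r * ψ'inv (c / r ^ 2) ≤ 4 * r ^ 2 := by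
  have hsmall : ∀ᶠ r in 𝓝[>] 0, α * r ^ 2 ≤ c := by
    have hcont : Tendsto (fun r : ℝ => α * r ^ 2) (𝓝 0) (𝓝 0) :=
      Continuous.tendsto' (by fun_prop) 0 0 (by simp)
    exact (hcont.eventually (eventually_le_nhds hc)).filter_mono nhdsWithin_le_nhds
  have hlarge : ∀ᶠ r in 𝓝[>] (0 : ℝ), 0 ≤ Real.log (Real.log (1 / r)) ∧
      Real.log (Real.log (1 / r)) ≤ 4 * (Real.log (Real.log (1 / r)) ^ 2 - c) :=
    tendsto_log_log_one_div_nhdsGT_zero.eventually (p := fun L => 0 ≤ L ∧ L ≤ 4 * (L ^ 2 - c)) <|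
      (eventually_ge_atTop (max 1 (2 * c))).mono fun L hL => by
        have := le_max_left 1 (2 * c)
        have := le_max_right 1 (2 * c)
        constructor <;> nlinarith
  obtain ⟨ε, hε, hεgood⟩ := mem_nhdsGT_iff_exists_Ioo_subset.1 (hsmall.and hlarge)
  have hr₀ := gaugeR0_pos h.alpha_nonneg
  refine ⟨min ε (gaugeR0 α / 2), lt_min hε (by positivity),
    (min_le_right _ _).trans_lt (by linarith), fun r hr hrε => ?_⟩
  obtain ⟨hαc, hL, hLc⟩ := hεgood ⟨hr, hrε.trans_le (min_le_left _ _)⟩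
  exact gaugeFun_mul_le h hψinv' hφinv' hψ'inv hr hαc hL hLc

/-- if γ > 1, then for every c > 0 there is r(c) ∈ (0, r₀) such
that g(r)·ψ′^{−1}(c·r^{−2}) ≤ 4r² for all r ∈ (0, r(c)). -/
theorem statement7 (α β : ℝ) (π : Measure ℝ) (h : IsBranchingMechanism α β π)
    (hγ : 1 < lowerIndex (psiFun α β π))
    (ψinv φinv ψ'inv : ℝ → ℝ)
    (hψinv : ∀ x : ℝ, 0 ≤ x → 0 ≤ ψinv x ∧ psiFun α β π (ψinv x) = x)
    (hψinv' : ∀ y : ℝ, 0 ≤ y → ψinv (psiFun α β π y) = y)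
    (hφinv : ∀ x : ℝ, α ≤ x → 0 ≤ φinv x ∧ psiDeriv α β π (ψinv (φinv x)) = x)
    (hφinv' : ∀ y : ℝ, 0 ≤ y → φinv (psiDeriv α β π (ψinv y)) = y)
    (hψ'inv : ∀ x : ℝ, α ≤ x → 0 ≤ ψ'inv x ∧ psiDeriv α β π (ψ'inv x) = x)
    (hψ'inv' : ∀ y : ℝ, 0 ≤ y → ψ'inv (psiDeriv α β π y) = y)
    (c : ℝ) (hc : 0 < c) :
    ∃ rc : ℝ, 0 < rc ∧ rc < gaugeR0 α ∧
      ∀ r : ℝ, 0 < r → r < rc →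
        gaugeFun φinv r * ψ'inv (c / r ^ 2) ≤ 4 * r ^ 2 :=
  statement7_general α β π h ψinv φinv ψ'inv hψinv' hφinv' hψ'inv c hc
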